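/- For any simplicial group G, the Kan classifying simplicial set W̄G and the diagonal of the dimensionwise nerve Diag NG are simplicially homotopy equivalent, via the mutually inverse homotopy equivalences D_G and S_G. -/

import Mathlib

namespace Paper

/-- clamped coface map `δ^k : [a] → [b]`. -/
def δOH (k a b : ℕ) : Fin (a+1) →o Fin (b+1) where
  toFun i := ⟨min (if (i:ℕ) < k then (i:ℕ) else (i:ℕ)+1) b, Nat.lt_succ_of_le (Nat.min_le_right _ _)⟩
  monotone' := by
    intro i j hij
    have h : (i:ℕ) ≤ (j:ℕ) := hij
    simp only [Fin.mk_le_mk]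
    split_ifs <;> omega

/-- clamped codegeneracy map `σ^k : [a] → [b]`. -/
def σOH (k a b : ℕ) : Fin (a+1) →o Fin (b+1) where
  toFun i := ⟨min (if (i:ℕ) ≤ k then (i:ℕ) else (i:ℕ)-1) b, Nat.lt_succ_of_le (Nat.min_le_right _ _)⟩
  monotone' := by
    intro i j hij
    have h : (i:ℕ) ≤ (j:ℕ) := hij
    simp only [Fin.mk_le_mk]
    split_ifs <;> omega

/-- `τ^k : [n] → [1]`, sending `[0, n-k]` to `0` and the rest to `1`. -/
def τOH (n k : ℕ) : Fin (n+1) →o Fin 2 where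
  toFun i := if (i:ℕ) + k ≤ n then 0 else 1
  monotone' := by
    intro i j hij
    have h : (i:ℕ) ≤ (j:ℕ) := hij
    dsimp only
    split_ifs with h1 h2 h3
    · exact le_refl _
    · exact Fin.zero_le _
    · exact absurd h3 (by omega)
    · exact le_refl _

/-- application of `θ : [m] → [n]` to a natural number (clamped). -/
def fApp {m n : ℕ} (θ : Fin (m+1) →o Fin (n+1)) (x : ℕ) : ℕ :=
  (θ ⟨min x m, Nat.lt_succ_of_le (Nat.min_le_right _ _)⟩ : Fin (n+1))

theorem fApp_mono {m n : ℕ} (θ : Fin (m+1) →o Fin (n+1)) {x y : ℕ} (h : x ≤ y) :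
    fApp θ x ≤ fApp θ y :=
  Fin.le_def.mp (θ.monotone (Fin.mk_le_mk.mpr (by omega)))

theorem fApp_le {m n : ℕ} (θ : Fin (m+1) →o Fin (n+1)) (x : ℕ) : fApp θ x ≤ n :=
  Nat.lt_succ_iff.mp (Fin.isLt _)

theorem fApp_coe {m n : ℕ} (θ : Fin (m+1) →o Fin (n+1)) (p : Fin (m+1)) :
    fApp θ (p:ℕ) = (θ p : ℕ) := by
  have hp : (⟨min (p:ℕ) m, Nat.lt_succ_of_le (Nat.min_le_right _ _)⟩ : Fin (m+1)) = p :=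
    Fin.ext (show min (p:ℕ) m = (p:ℕ) from by have := p.isLt; omega)
  unfold fApp
  rw [hp]

/-- `Spl_{≤ p}(θ) : [p] → [pθ]`. -/
def splLe {m n : ℕ} (θ : Fin (m+1) →o Fin (n+1)) (p : Fin (m+1)) :
    Fin ((p:ℕ)+1) →o Fin ((θ p : ℕ)+1) where
  toFun i := ⟨fApp θ (i:ℕ), by
    have h1 : fApp θ (i:ℕ) ≤ fApp θ (p:ℕ) := fApp_mono θ (by have := i.isLt; omega)
    have h2 : fApp θ (p:ℕ) = (θ p : ℕ) := fApp_coe θ p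
    omega⟩
  monotone' := by
    intro a b hab
    have h : (a:ℕ) ≤ (b:ℕ) := hab
    simp only [Fin.mk_le_mk]
    exact fApp_mono θ h

/-- `Spl_{≥ p}(θ) : [m-p] → [n-pθ]`. -/
def splGe {m n : ℕ} (θ : Fin (m+1) →o Fin (n+1)) (p : Fin (m+1)) :
    Fin (m - (p:ℕ) + 1) →o Fin (n - (θ p : ℕ) + 1) where
  toFun i := ⟨fApp θ ((i:ℕ) + (p:ℕ)) - (θ p : ℕ), by
    have h1 : fApp θ ((i:ℕ) + (p:ℕ)) ≤ n := fApp_le θ _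
    omega⟩
  monotone' := by
    intro a b hab
    have h : (a:ℕ) ≤ (b:ℕ) := hab
    simp only [Fin.mk_le_mk]
    have := fApp_mono θ (show (a:ℕ) + (p:ℕ) ≤ (b:ℕ) + (p:ℕ) by omega)
    omega

/-- the restriction `θ|_[i]^[j] : [i] → [j]` of `θ` (clamped). -/
def restrictOH {m n : ℕ} (θ : Fin (m+1) →o Fin (n+1)) (i j : ℕ) : Fin (i+1) →o Fin (j+1) where
  toFun k := ⟨min (fApp θ (k:ℕ)) j, Nat.lt_succ_of_le (Nat.min_le_right _ _)⟩
  monotone' := by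
    intro a b hab
    have h : (a:ℕ) ≤ (b:ℕ) := hab
    simp only [Fin.mk_le_mk]
    have := fApp_mono θ h
    omega

/-- ascending product `f a * f (a+1) * ⋯ * f (b-1)`. -/
def aProd {γ : Type*} [Monoid γ] (f : ℕ → γ) (a : ℕ) : ℕ → γ
  | 0 => 1
  | b+1 => if a ≤ b then aProd f a b * f b else 1

/-- descending product `f (b-1) * f (b-2) * ⋯ * f a`. -/
def dProd {γ : Type*} [Monoid γ] (f : ℕ → γ) (a : ℕ) : ℕ → γ
  | 0 => 1
  | b+1 => if a ≤ b then f b * dProd f a b else 1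

end Paper
namespace Paper

/-- A simplicial group, given by levels, structure maps, functoriality,
and levelwise multiplicativity. -/
structure SGrp where
  obj : ℕ → Type
  grp : ∀ n, Group (obj n)
  map : ∀ {m n : ℕ}, (Fin (m+1) →o Fin (n+1)) → obj n → obj m
  map_id : ∀ {n : ℕ} (x : obj n), map OrderHom.id x = x
  map_comp : ∀ {l m n : ℕ} (α : Fin (l+1) →o Fin (m+1)) (β : Fin (m+1) →o Fin (n+1)) (x : obj n),
    map α (map β x) = map (β.comp α) x
  map_mul : ∀ {m n : ℕ} (θ : Fin (m+1) →o Fin (n+1)) (x y : obj n),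
    map θ (x * y) = map θ x * map θ y

attribute [instance] SGrp.grp

namespace SGrp

/-- face `d_k : G_N → G_{N-1}` -/
def face (G : SGrp) (k : ℕ) {N : ℕ} : G.obj N → G.obj (N-1) := G.map (δOH k (N-1) N)

/-- degeneracy `s_k : G_M → G_{M+1}` -/
def deg (G : SGrp) (k : ℕ) {M : ℕ} : G.obj M → G.obj (M+1) := G.map (σOH k (M+1) M)

/-- transport between levels (junk value `1` when levels differ). -/
def gcast (G : SGrp) {a : ℕ} (b : ℕ) (x : G.obj a) : G.obj b := if h : a = b then h ▸ x else 1

/-- descending composite of faces `d_{i+c} d_{i+c-1} ⋯ d_{i+1}`. -/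
def dcomp (G : SGrp) : (i c : ℕ) → {N : ℕ} → G.obj N → G.obj (N - c)
  | _, 0, _, x => x
  | i, c+1, _, x => G.face (i+1) (G.dcomp (i+1) c x)

/-- ascending composite of degeneracies `s_i s_{i+1} ⋯ s_{i+c-1}`. -/
def scomp (G : SGrp) : (i c : ℕ) → {M : ℕ} → G.obj M → G.obj (M + c)
  | _, 0, _, x => x
  | i, c+1, _, x => G.deg (i+c) (G.scomp i c x)

/-- `x ↦ x d_j ⋯ d_{i+1} s_i ⋯ s_{j-1}`, an endomap of `G_N`. -/
def ds (G : SGrp) (i j : ℕ) {N : ℕ} (x : G.obj N) : G.obj N :=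
  G.gcast N (G.scomp i (min (j - i) N) (G.dcomp i (min (j - i) N) x))

/-- `x ↦ x d_j ⋯ d_{i+1} s_i ⋯ s_{n-1} : G_j → G_n`. -/
def dsTo (G : SGrp) (i n : ℕ) {j : ℕ} (x : G.obj j) : G.obj n :=
  G.gcast n (G.scomp i (n - i) (G.gcast i (G.dcomp i (j - i) x)))

/-- the `y_i` of the section `S_G`, defined by descending recursion (with fuel). -/
def yAux (G : SGrp) (n : ℕ) (g : ∀ j : ℕ, G.obj j) : ℕ → ℕ → G.obj n
  | 0, _ => 1
  | fuel+1, i =>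
      aProd (fun j => G.ds i j (G.yAux n g fuel j)⁻¹) (i+1) n *
      dProd (fun j => G.dsTo i n (g j)) i n

/-- `W̄_n G = ∏_{j = n-1}^{0} G_j`. -/
def WbarN (G : SGrp) (n : ℕ) : Type := ∀ j : Fin n, G.obj (j:ℕ)

/-- extension of a tuple in `W̄_n G` by `1`. -/
def gE (G : SGrp) {n : ℕ} (g : G.WbarN n) : ∀ j : ℕ, G.obj j :=
  fun j => if h : j < n then g ⟨j, h⟩ else 1

/-- the coretraction `(S_G)_n : W̄_n G → Diag_n NG = (G_n)^n`. -/
def SGn (G : SGrp) (n : ℕ) (g : G.WbarN n) : Fin n → G.obj n :=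
  fun i => G.yAux n (G.gE g) n (i:ℕ)

/-- extension of a tuple in `(G_n)^n` by `1`. -/
def xE (G : SGrp) {n : ℕ} (x : Fin n → G.obj n) : ℕ → G.obj n :=
  fun j => if h : j < n then x ⟨j, h⟩ else 1

/-- the structure map `W̄_θ : W̄_n G → W̄_m G` of the Kan classifying simplicial set. -/
def wbarMap (G : SGrp) {m n : ℕ} (θ : Fin (m+1) →o Fin (n+1)) (g : G.WbarN n) : G.WbarN m :=
  fun i => dProd (fun j => G.map (restrictOH θ (i:ℕ) j) (G.gE g j))
    ((θ i.castSucc : Fin (n+1)) : ℕ) ((θ i.succ : Fin (n+1)) : ℕ)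

/-- the structure map `(Diag NG)_θ : (G_n)^n → (G_m)^m` of the diagonal of the nerve. -/
def diagMap (G : SGrp) {m n : ℕ} (θ : Fin (m+1) →o Fin (n+1)) (x : Fin n → G.obj n) :
    Fin m → G.obj m :=
  fun i => dProd (fun j => G.map θ (G.xE x j))
    ((θ i.castSucc : Fin (n+1)) : ℕ) ((θ i.succ : Fin (n+1)) : ℕ)

/-- the retraction `(D_G)_n : Diag_n NG → W̄_n G`, `(g_i)_i ↦ (g_i d_n ⋯ d_{i+1})_i`. -/
def DGn (G : SGrp) (n : ℕ) (x : Fin n → G.obj n) : G.WbarN n :=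
  fun i => G.gcast (i:ℕ) (G.dcomp (i:ℕ) (n - (i:ℕ)) (x i))

/-- the components `y_i^{(n+1-k)}` of the homotopy `H`, by descending recursion (with fuel). -/
def hAux (G : SGrp) (n k : ℕ) (g : ℕ → G.obj n) : ℕ → ℕ → G.obj n
  | 0, _ => 1
  | fuel+1, i =>
      if k ≤ i + 1 then g i
      else
        aProd (fun j => G.ds i j (G.hAux n k g fuel j)⁻¹) (i+1) (k-1) *
        dProd (fun j => G.ds i (k-1) (g j)) i (k-1)

end SGrp

/-- recover `k` from the simplex `τ^{n+1-k} ∈ Δ^1_n`: the number of vertices sent to `0`. -/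
def kOf {n : ℕ} (t : Fin (n+1) →o Fin 2) : ℕ :=
  (Finset.univ.filter (fun i => t i = 0)).card

namespace SGrp

/-- the homotopy `H_n : Diag_n NG × Δ^1_n → Diag_n NG`. -/
def Hn (G : SGrp) (n : ℕ) (x : Fin n → G.obj n) (t : Fin (n+1) →o Fin 2) : Fin n → G.obj n :=
  fun i => G.hAux n (kOf t) (G.xE x) (n+1) (i:ℕ)

end SGrp

/-- morphisms of simplicial groups. -/
structure SGrpHom (G G' : SGrp) where
  app : ∀ n, G.obj n → G'.obj n
  comm : ∀ {m n : ℕ} (θ : Fin (m+1) →o Fin (n+1)) (x : G.obj n),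
    app m (G.map θ x) = G'.map θ (app n x)
  mul : ∀ (n : ℕ) (x y : G.obj n), app n (x * y) = app n x * app n y

end Paper

/-!
Write `m_{ij} = d_j ⋯ d_{i+1} s_i ⋯ s_{j-1}` for the operator collapsing `[i, j]` to `i`.
The entries `y_0, …, y_{n-1}` of the homotopy `H` at the simplex `τ^{n+1-k}` of `Δ^1_n`,
built from `g ∈ Diag_n NG`, are the unique solution of the triangular system
`(y_{k-2} m_{i,k-2}) ⋯ (y_{i+1} m_{i,i+1}) y_i = (g_{k-2} ⋯ g_i) m_{i,k-1}` for `i < k`,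
`y_i = g_i` for `i ≥ k - 1`.
For `k = 0` the solution is `g`, and for `k = n + 1` the entries of `S_G D_G g` solve the same
system, which gives the two ends of `H`. Naturality of `H` is checked for an arbitrary operator
`θ : [m] → [n]` at once: if `θ` sends exactly the vertices below `K` into `[0, k)`, then `θ` takes
no value in `(θ(K-1), k-1]`, and this is enough to move `m_{ij}` past `θ` and to show that the
image under `θ` of a solution for `k` solves the system for `K`. On the other side `D_G S_G = id`,
so the constant homotopy suffices.
-/

namespace Paper

section Prod
variable {γ : Type*} [Monoid γ] (f g : ℕ → γ)

theorem aProd_empty {a b : ℕ} (h : b ≤ a) : aProd f a b = 1 := by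
  cases b with
  | zero => rfl
  | succ b => exact if_neg (by omega)

theorem dProd_empty {a b : ℕ} (h : b ≤ a) : dProd f a b = 1 := by
  cases b with
  | zero => rfl
  | succ b => exact if_neg (by omega)

theorem aProd_succ {a b : ℕ} (h : a ≤ b) : aProd f a (b+1) = aProd f a b * f b := if_pos h

theorem dProd_succ {a b : ℕ} (h : a ≤ b) : dProd f a (b+1) = f b * dProd f a b := if_pos h

theorem dProd_single (a : ℕ) : dProd f a (a+1) = f a := by
  rw [dProd_succ f le_rfl, dProd_empty f le_rfl, mul_one]

theorem aProd_congr {a b : ℕ} (h : ∀ j, a ≤ j → j < b → f j = g j) :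
    aProd f a b = aProd g a b := by
  induction b with
  | zero => rfl
  | succ b ih =>
    by_cases hab : a ≤ b
    · rw [aProd_succ f hab, aProd_succ g hab, ih (fun j h1 h2 => h j h1 (by omega)),
        h b hab (by omega)]
    · rw [aProd_empty f (by omega), aProd_empty g (by omega)]

theorem dProd_congr {a b : ℕ} (h : ∀ j, a ≤ j → j < b → f j = g j) :
    dProd f a b = dProd g a b := by
  induction b with
  | zero => rfl
  | succ b ih =>
    by_cases hab : a ≤ b
    · rw [dProd_succ f hab, dProd_succ g hab, ih (fun j h1 h2 => h j h1 (by omega)),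
        h b hab (by omega)]
    · rw [dProd_empty f (by omega), dProd_empty g (by omega)]

theorem dProd_split {a b c : ℕ} (hab : a ≤ b) (hbc : b ≤ c) :
    dProd f a c = dProd f b c * dProd f a b := by
  induction c, hbc using Nat.le_induction with
  | base => rw [dProd_empty f le_rfl, one_mul]
  | succ c hbc ih => rw [dProd_succ f (by omega), dProd_succ f hbc, ih, mul_assoc]

theorem dProd_of_lt {a b : ℕ} (h : a < b) : dProd f a b = dProd f (a+1) b * f a := by
  rw [dProd_split f a.le_succ h, dProd_single]

theorem dProd_glue (ψ : ℕ → ℕ) (hψ : Monotone ψ) {a b : ℕ} (hab : a ≤ b) :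
    dProd (fun u => dProd f (ψ u) (ψ (u+1))) a b = dProd f (ψ a) (ψ b) := by
  induction b, hab using Nat.le_induction with
  | base => rw [dProd_empty _ le_rfl, dProd_empty f le_rfl]
  | succ b hab ih =>
    rw [dProd_succ _ hab, ih, ← dProd_split f (hψ hab) (hψ b.le_succ)]

end Prod

theorem aProd_inv_mul_dProd {γ : Type*} [Group γ] (f : ℕ → γ) (a b : ℕ) :
    aProd (fun j => (f j)⁻¹) a b * dProd f a b = 1 := by
  induction b with
  | zero => rw [aProd_empty _ (by omega), dProd_empty f (by omega), one_mul]
  | succ b ih =>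
    by_cases hab : a ≤ b
    · rw [aProd_succ _ hab, dProd_succ f hab, mul_assoc, inv_mul_cancel_left, ih]
    · rw [aProd_empty _ (by omega), dProd_empty f (by omega), one_mul]

theorem forall_by_descending_induction {P : ℕ → Prop} (N : ℕ) (hN : ∀ i, N ≤ i → P i)
    (h : ∀ i, i < N → (∀ j, i < j → P j) → P i) (i : ℕ) : P i := by
  suffices ∀ d i, N ≤ i + d → P i from this N i (by omega)
  intro d
  induction d with
  | zero => exact fun i hi => hN i (by omega)
  | succ d ih =>
    intro i hi
    by_cases hNi : N ≤ i
    · exact hN i hNi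
    · exact h i (by omega) (fun j hj => ih j (by omega))

theorem fApp_ext {m n : ℕ} {φ ψ : Fin (m+1) →o Fin (n+1)}
    (h : ∀ v : ℕ, fApp φ v = fApp ψ v) : φ = ψ := by
  refine OrderHom.ext _ _ (funext fun v => Fin.ext ?_)
  rw [← fApp_coe φ v, ← fApp_coe ψ v, h]

theorem fApp_comp {l m n : ℕ} (α : Fin (l+1) →o Fin (m+1)) (β : Fin (m+1) →o Fin (n+1))
    (v : ℕ) : fApp (β.comp α) v = fApp β (fApp α v) :=
  (fApp_coe β _).symm

theorem fApp_id {n : ℕ} (v : ℕ) : fApp (OrderHom.id : Fin (n+1) →o Fin (n+1)) v = min v n := rfl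

theorem fApp_congr {m n : ℕ} (θ : Fin (m+1) →o Fin (n+1)) {x y : ℕ} (h : min x m = min y m) :
    fApp θ x = fApp θ y := by
  unfold fApp
  exact congrArg (fun p => ((θ p : Fin (n+1)) : ℕ)) (Fin.ext h)

theorem fApp_le_fApp_of_min_le {m n : ℕ} (θ : Fin (m+1) →o Fin (n+1)) {x y : ℕ}
    (h : min x m ≤ y) : fApp θ x ≤ fApp θ y := by
  rw [fApp_congr θ (show min x m = min (min x m) m by omega)]
  exact fApp_mono θ h

theorem fApp_δOH (k a b v : ℕ) :
    fApp (δOH k a b) v = min (if min v a < k then min v a else min v a + 1) b := rfl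

theorem fApp_σOH (k a b v : ℕ) :
    fApp (σOH k a b) v = min (if min v a ≤ k then min v a else min v a - 1) b := rfl

/-- `mOH i j N` collapses `[i, j] ⊆ [N]` to the vertex `i`. -/
def mOH (i j N : ℕ) : Fin (N+1) →o Fin (N+1) where
  toFun v := ⟨if (v:ℕ) ≤ j then min (v:ℕ) i else (v:ℕ), by have := v.isLt; split <;> omega⟩
  monotone' _ _ h := by
    simp only [Fin.mk_le_mk]
    split_ifs <;> omega

def iOH (a b : ℕ) : Fin (a+1) →o Fin (b+1) where
  toFun v := ⟨min (v:ℕ) b, by omega⟩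
  monotone' _ _ h := by
    simp only [Fin.mk_le_mk]
    omega

def cOH (i a b : ℕ) : Fin (a+1) →o Fin (b+1) where
  toFun v := ⟨min (min (v:ℕ) i) b, by omega⟩
  monotone' _ _ h := by
    simp only [Fin.mk_le_mk]
    omega

def dUp (i c N : ℕ) : Fin (N-c+1) →o Fin (N+1) where
  toFun v := ⟨min (if (v:ℕ) ≤ i then (v:ℕ) else (v:ℕ) + c) N, by omega⟩
  monotone' _ _ h := by
    simp only [Fin.mk_le_mk]
    split_ifs <;> omega

def sDn (i c M : ℕ) : Fin (M+c+1) →o Fin (M+1) where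
  toFun v := ⟨min (if (v:ℕ) ≤ i then (v:ℕ) else if (v:ℕ) ≤ i + c then i else (v:ℕ) - c) M,
    by omega⟩
  monotone' _ _ h := by
    simp only [Fin.mk_le_mk]
    split_ifs <;> omega

theorem fApp_mOH (i j N v : ℕ) :
    fApp (mOH i j N) v = if min v N ≤ j then min (min v N) i else min v N := rfl

theorem fApp_iOH (a b v : ℕ) : fApp (iOH a b) v = min (min v a) b := rfl

theorem fApp_cOH (i a b v : ℕ) : fApp (cOH i a b) v = min (min (min v a) i) b := rfl

theorem fApp_dUp (i c N v : ℕ) :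
    fApp (dUp i c N) v = min (if min v (N-c) ≤ i then min v (N-c) else min v (N-c) + c) N := rfl

theorem fApp_sDn (i c M v : ℕ) :
    fApp (sDn i c M) v = min (if min v (M+c) ≤ i then min v (M+c)
      else if min v (M+c) ≤ i + c then i else min v (M+c) - c) M := rfl

theorem kOf_le {n : ℕ} (t : Fin (n+1) →o Fin 2) : kOf t ≤ n + 1 :=
  (Finset.card_filter_le _ _).trans (by simp)

theorem apply_eq_zero_iff_lt_kOf {n : ℕ} (t : Fin (n+1) →o Fin 2) (v : Fin (n+1)) :
    t v = 0 ↔ (v:ℕ) < kOf t := by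
  unfold kOf
  constructor
  · intro hv
    have hsub : Finset.Iic v ⊆ Finset.univ.filter (fun w => t w = 0) := fun w hw => by
      rw [Finset.mem_Iic] at hw
      rw [Finset.mem_filter]
      exact ⟨Finset.mem_univ _, le_antisymm (hv ▸ t.monotone hw) (Fin.zero_le _)⟩
    have := Finset.card_le_card hsub
    rw [Fin.card_Iic] at this
    omega
  · intro hv
    by_contra hne
    have hsub : Finset.univ.filter (fun w => t w = 0) ⊆ Finset.Iio v := fun w hw => by
      rw [Finset.mem_filter] at hw
      rw [Finset.mem_Iio]
      by_contra hvw
      have := t.monotone (not_lt.mp hvw)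
      rw [hw.2] at this
      exact hne (le_antisymm this (Fin.zero_le _))
    have := Finset.card_le_card hsub
    rw [Fin.card_Iio] at this
    omega

theorem fApp_lt_kOf_iff {m n : ℕ} (t : Fin (n+1) →o Fin 2) (θ : Fin (m+1) →o Fin (n+1))
    (v : ℕ) : fApp θ v < kOf t ↔ min v m < kOf (t.comp θ) :=
  (apply_eq_zero_iff_lt_kOf t _).symm.trans (apply_eq_zero_iff_lt_kOf (t.comp θ) _)

theorem kOf_τOH (n k₀ : ℕ) : kOf (τOH n k₀) = n + 1 - k₀ := by
  unfold kOf
  rw [Finset.filter_congr (q := fun u : Fin (n+1) => (u:ℕ) < n + 1 - k₀) (fun u _ => by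
    show (if (u:ℕ) + k₀ ≤ n then (0 : Fin 2) else 1) = 0 ↔ _
    split_ifs <;> simp <;> omega), Fin.card_filter_val_lt]
  omega

namespace SGrp
variable (G : SGrp)

theorem map_congr_fApp {m n : ℕ} {φ ψ : Fin (m+1) →o Fin (n+1)}
    (h : ∀ v : ℕ, fApp φ v = fApp ψ v) (x : G.obj n) : G.map φ x = G.map ψ x := by
  rw [fApp_ext h]

theorem map_one {m n : ℕ} (θ : Fin (m+1) →o Fin (n+1)) : G.map θ (1 : G.obj n) = 1 :=
  (mul_eq_left (a := G.map θ 1)).mp (by rw [← G.map_mul, mul_one])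

theorem map_inv {m n : ℕ} (θ : Fin (m+1) →o Fin (n+1)) (x : G.obj n) :
    G.map θ x⁻¹ = (G.map θ x)⁻¹ :=
  eq_inv_of_mul_eq_one_left (by rw [← G.map_mul, inv_mul_cancel, G.map_one])

theorem map_dProd {m n : ℕ} (θ : Fin (m+1) →o Fin (n+1)) (f : ℕ → G.obj n) (a b : ℕ) :
    G.map θ (dProd f a b) = dProd (fun j => G.map θ (f j)) a b := by
  induction b with
  | zero => exact G.map_one θ
  | succ b ih =>
    by_cases hab : a ≤ b
    · rw [dProd_succ f hab, dProd_succ _ hab, G.map_mul, ih]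
    · rw [dProd_empty f (by omega), dProd_empty _ (by omega), G.map_one]

theorem map_aProd {m n : ℕ} (θ : Fin (m+1) →o Fin (n+1)) (f : ℕ → G.obj n) (a b : ℕ) :
    G.map θ (aProd f a b) = aProd (fun j => G.map θ (f j)) a b := by
  induction b with
  | zero => exact G.map_one θ
  | succ b ih =>
    by_cases hab : a ≤ b
    · rw [aProd_succ f hab, aProd_succ _ hab, G.map_mul, ih]
    · rw [aProd_empty f (by omega), aProd_empty _ (by omega), G.map_one]

theorem gcast_map {a b c : ℕ} (h : a = b) (x : G.obj c)
    (φ : Fin (a+1) →o Fin (c+1)) (ψ : Fin (b+1) →o Fin (c+1))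
    (hφψ : ∀ v : ℕ, fApp φ v = fApp ψ v) : G.gcast b (G.map φ x) = G.map ψ x := by
  subst h
  rw [show G.gcast a (G.map φ x) = G.map φ x from dif_pos rfl, G.map_congr_fApp hφψ]

theorem dcomp_eq_map {c i N : ℕ} (h : i + c ≤ N) (x : G.obj N) :
    G.dcomp i c x = G.map (dUp i c N) x := by
  induction c generalizing i with
  | zero =>
    rw [show dUp i 0 N = OrderHom.id from fApp_ext (fun v => by
      simp only [fApp_dUp, fApp_id]; split_ifs <;> omega), G.map_id]
    rfl
  | succ c ih =>
    show G.map (δOH (i+1) (N-c-1) (N-c)) (G.dcomp (i+1) c x) = _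
    rw [ih (by omega), G.map_comp]
    exact G.map_congr_fApp (fun v => by
      simp only [fApp_comp, fApp_dUp, fApp_δOH]; split_ifs <;> omega) x

theorem scomp_eq_map {c i M : ℕ} (h : i ≤ M) (x : G.obj M) :
    G.scomp i c x = G.map (sDn i c M) x := by
  induction c with
  | zero =>
    rw [show sDn i 0 M = OrderHom.id from fApp_ext (fun v => by
      simp only [fApp_sDn, fApp_id]; split_ifs <;> omega), G.map_id]
    rfl
  | succ c ih =>
    show G.map (σOH (i+c) (M+c+1) (M+c)) (G.scomp i c x) = _
    rw [ih, G.map_comp]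
    exact G.map_congr_fApp (fun v => by
      simp only [fApp_comp, fApp_sDn, fApp_σOH]; split_ifs <;> omega) x

theorem ds_eq_map {i j N : ℕ} (hij : i ≤ j) (hjN : j ≤ N) (x : G.obj N) :
    G.ds i j x = G.map (mOH i j N) x := by
  unfold ds
  rw [show min (j - i) N = j - i by omega, G.dcomp_eq_map (by omega) x,
    G.scomp_eq_map (c := j - i) (M := N - (j - i)) (by omega), G.map_comp]
  exact G.gcast_map (by omega) x _ _ (fun v => by
    simp only [fApp_comp, fApp_dUp, fApp_sDn, fApp_mOH]; split_ifs <;> omega)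

theorem dsTo_eq_map {i n j : ℕ} (hij : i ≤ j) (hin : i ≤ n) (x : G.obj j) :
    G.dsTo i n x = G.map (cOH i n j) x := by
  unfold dsTo
  rw [G.dcomp_eq_map (by omega) x,
    G.gcast_map (a := j - (j-i)) (by omega) x (dUp i (j-i) j) (iOH i j) (fun v => by
      simp only [fApp_dUp, fApp_iOH]; split_ifs <;> omega),
    G.scomp_eq_map le_rfl, G.map_comp]
  exact G.gcast_map (by omega) x _ _ (fun v => by
    simp only [fApp_comp, fApp_iOH, fApp_sDn, fApp_cOH]; split_ifs <;> omega)

theorem DGn_apply {n : ℕ} (x : Fin n → G.obj n) (i : Fin n) :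
    G.DGn n x i = G.map (iOH i n) (x i) := by
  unfold DGn
  rw [G.dcomp_eq_map (by omega) (x i)]
  exact G.gcast_map (by omega) (x i) _ _ (fun v => by
    simp only [fApp_dUp, fApp_iOH]; split_ifs <;> omega)

theorem map_mOH_self {i N : ℕ} (w : G.obj N) : G.map (mOH i i N) w = w := by
  rw [show mOH i i N = OrderHom.id from fApp_ext (fun v => by
    rw [fApp_mOH, fApp_id]; split_ifs <;> omega), G.map_id]

theorem map_map_mOH_congr {m n a b c u : ℕ} (φ : Fin (m+1) →o Fin (n+1))
    (hφ : ∀ v, fApp φ v ≤ c → fApp φ v ≤ a) (hau : a ≤ u) (huc : u ≤ c) (w : G.obj n) :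
    G.map φ (G.map (mOH b u n) w) = G.map φ (G.map (mOH b c n) w) := by
  rw [G.map_comp, G.map_comp]
  refine G.map_congr_fApp (fun v => ?_) w
  have := hφ v
  have := fApp_le φ v
  simp only [fApp_comp, fApp_mOH]
  split_ifs <;> omega

theorem map_map_mOH_absorb {m n a c : ℕ} (φ : Fin (m+1) →o Fin (n+1))
    (hφ : ∀ v, fApp φ v ≤ c → fApp φ v ≤ a) (hac : a ≤ c) (w : G.obj n) :
    G.map φ (G.map (mOH a c n) w) = G.map φ w := by
  rw [← G.map_map_mOH_congr φ hφ le_rfl hac, G.map_mOH_self]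

theorem map_mOH_map_comm {m n i j u : ℕ} (θ : Fin (m+1) →o Fin (n+1))
    (hju : fApp θ j ≤ u) (hu : ∀ v, j < v → v ≤ m → u < fApp θ v) (w : G.obj n) :
    G.map (mOH i j m) (G.map θ w) = G.map θ (G.map (mOH (fApp θ i) u n) w) := by
  rw [G.map_comp, G.map_comp]
  refine G.map_congr_fApp (fun v => ?_) w
  have hθv : fApp θ (min v m) = fApp θ v := fApp_congr θ (by omega)
  have hθn := fApp_le θ v
  simp only [fApp_comp, fApp_mOH]
  by_cases hv : min v m ≤ j
  · have hvu : fApp θ v ≤ u := (fApp_le_fApp_of_min_le θ hv).trans hju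
    rw [if_pos hv, if_pos (by omega)]
    rcases le_total (min v m) i with hvi | hiv
    · have := fApp_le_fApp_of_min_le θ hvi
      rw [min_eq_left hvi, hθv]
      omega
    · have := fApp_le_fApp_of_min_le θ (show min i m ≤ min v m by omega)
      rw [min_eq_right hiv]
      omega
  · have := hu (min v m) (by omega) (by omega)
    rw [if_neg hv, if_neg (by omega), hθv]
    omega

theorem hAux_of_le {n k : ℕ} {g : ℕ → G.obj n} {f i : ℕ} (hk : k ≤ i + 1) (hf : 1 ≤ f) :
    G.hAux n k g f i = g i := by
  obtain ⟨f, rfl⟩ := Nat.exists_eq_add_of_le' hf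
  rw [hAux, if_pos hk]

theorem hAux_succ_fuel (n k : ℕ) (g : ℕ → G.obj n) {f i : ℕ} (hf : 1 ≤ f)
    (hk : k ≤ i + f + 1) : G.hAux n k g (f+1) i = G.hAux n k g f i := by
  induction f generalizing i with
  | zero => omega
  | succ f ih =>
    by_cases hki : k ≤ i + 1
    · rw [G.hAux_of_le hki (by omega), G.hAux_of_le hki (by omega)]
    · rw [hAux, hAux, if_neg hki, if_neg hki]
      congr 1
      refine aProd_congr _ _ (fun j hj1 hj2 => ?_)
      rw [ih (by omega) (by omega)]

def homotopyY (n k : ℕ) (g : ℕ → G.obj n) (i : ℕ) : G.obj n := G.hAux n k g (n+1) i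

theorem homotopyY_of_le {n k : ℕ} {g : ℕ → G.obj n} {i : ℕ} (hk : k ≤ i + 1) :
    G.homotopyY n k g i = g i := G.hAux_of_le hk (by omega)

theorem homotopyY_rec {n k : ℕ} (g : ℕ → G.obj n) {i : ℕ} (hk : k ≤ n + 1) (hik : i + 2 ≤ k) :
    G.homotopyY n k g i =
      aProd (fun j => (G.map (mOH i j n) (G.homotopyY n k g j))⁻¹) (i+1) (k-1) *
      G.map (mOH i (k-1) n) (dProd g i (k-1)) := by
  show G.hAux n k g (n+1) i = _
  rw [hAux, if_neg (by omega), G.map_dProd]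
  congr 1
  · refine aProd_congr _ _ (fun j hj1 hj2 => ?_)
    rw [G.ds_eq_map (by omega) (by omega), G.map_inv,
      ← G.hAux_succ_fuel n k g (by omega) (by omega)]
    rfl
  · exact dProd_congr _ _ (fun j _ _ => G.ds_eq_map (by omega) (by omega) _)

theorem yAux_of_le {n : ℕ} {g : ∀ j : ℕ, G.obj j} {f i : ℕ} (hn : n ≤ i) (hf : 1 ≤ f) :
    G.yAux n g f i = 1 := by
  obtain ⟨f, rfl⟩ := Nat.exists_eq_add_of_le' hf
  rw [yAux, aProd_empty _ (by omega), dProd_empty _ (by omega), one_mul]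

theorem yAux_succ_fuel (n : ℕ) (g : ∀ j : ℕ, G.obj j) {f i : ℕ} (hf : n ≤ i + f) :
    G.yAux n g (f+1) i = G.yAux n g f i := by
  induction f generalizing i with
  | zero => exact G.yAux_of_le (by omega) le_rfl
  | succ f ih =>
    rw [yAux, yAux]
    congr 1
    refine aProd_congr _ _ (fun j hj1 hj2 => ?_)
    rw [ih (by omega)]

def sectionY (n : ℕ) (g : ∀ j : ℕ, G.obj j) (i : ℕ) : G.obj n := G.yAux n g (n+1) i

theorem sectionY_of_le {n : ℕ} {g : ∀ j : ℕ, G.obj j} {i : ℕ} (hn : n ≤ i) :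
    G.sectionY n g i = 1 :=
  G.yAux_of_le hn (by omega)

theorem sectionY_rec {n : ℕ} (g : ∀ j : ℕ, G.obj j) {i : ℕ} (hin : i ≤ n) :
    G.sectionY n g i = aProd (fun j => (G.map (mOH i j n) (G.sectionY n g j))⁻¹) (i+1) n *
      dProd (fun j => G.map (cOH i n j) (g j)) i n := by
  show G.yAux n g (n+1) i = _
  rw [yAux]
  congr 1
  · refine aProd_congr _ _ (fun j hj1 hj2 => ?_)
    rw [G.ds_eq_map (by omega) (by omega), G.map_inv, ← G.yAux_succ_fuel n g (by omega)]
    rfl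
  · exact dProd_congr _ _ (fun j _ _ => G.dsTo_eq_map (by omega) hin _)

theorem SGn_apply {n : ℕ} (g : G.WbarN n) (i : Fin n) :
    G.SGn n g i = G.sectionY n (G.gE g) i :=
  (G.yAux_succ_fuel n (G.gE g) (by omega)).symm

theorem map_iOH_sectionY {n : ℕ} (g : ∀ j : ℕ, G.obj j) :
    ∀ i, i < n → G.map (iOH i n) (G.sectionY n g i) = g i := by
  refine forall_by_descending_induction n (fun i hi h => absurd h (by omega)) ?_
  intro i hi ih _
  rw [G.sectionY_rec g hi.le, G.map_mul, G.map_aProd, G.map_dProd, dProd_of_lt _ hi,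
    ← mul_assoc]
  have hA :
      aProd (fun j => G.map (iOH i n) (G.map (mOH i j n) (G.sectionY n g j))⁻¹) (i+1) n
      = aProd (fun j => (G.map (iOH i j) (g j))⁻¹) (i+1) n := by
    refine aProd_congr _ _ (fun j hj1 hj2 => ?_)
    rw [G.map_inv, G.map_comp, G.map_congr_fApp (ψ := (iOH j n).comp (iOH i j)) (fun v => by
      simp only [fApp_comp, fApp_mOH, fApp_iOH]; split_ifs <;> omega), ← G.map_comp,
      ih j hj1 hj2]
  have hB : dProd (fun j => G.map (iOH i n) (G.map (cOH i n j) (g j))) (i+1) n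
      = dProd (fun j => G.map (iOH i j) (g j)) (i+1) n := by
    refine dProd_congr _ _ (fun j hj1 hj2 => ?_)
    rw [G.map_comp, G.map_congr_fApp (ψ := iOH i j) (fun v => by
      simp only [fApp_comp, fApp_cOH, fApp_iOH]; omega)]
  rw [hA, hB, aProd_inv_mul_dProd, one_mul, G.map_comp,
    G.map_congr_fApp (ψ := OrderHom.id) (fun v => by
      simp only [fApp_comp, fApp_cOH, fApp_iOH, fApp_id]; omega), G.map_id]

theorem DGn_SGn {n : ℕ} (g : G.WbarN n) : G.DGn n (G.SGn n g) = g := by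
  funext i
  rw [G.DGn_apply, G.SGn_apply, G.map_iOH_sectionY (G.gE g) i i.isLt, gE, dif_pos i.isLt]

def IsTriangularSolution {n : ℕ} (k : ℕ) (g y : ℕ → G.obj n) : Prop :=
  (∀ i, k ≤ i + 1 → y i = g i) ∧
  ∀ i, i < k → dProd (fun j => G.map (mOH i j n) (y j)) i (k-1) =
    G.map (mOH i (k-1) n) (dProd g i (k-1))

theorem isTriangularSolution_of_rec {n k : ℕ} {g y : ℕ → G.obj n}
    (hhi : ∀ i, k ≤ i + 1 → y i = g i)
    (hrec : ∀ i, i + 2 ≤ k → y i = aProd (fun j => (G.map (mOH i j n) (y j))⁻¹) (i+1) (k-1) *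
      G.map (mOH i (k-1) n) (dProd g i (k-1))) :
    G.IsTriangularSolution k g y := by
  refine ⟨hhi, fun i hi => ?_⟩
  rcases (show k = i + 1 ∨ i + 2 ≤ k by omega) with rfl | hik
  · rw [Nat.add_sub_cancel, dProd_empty _ le_rfl, dProd_empty _ le_rfl, G.map_one]
  · rw [dProd_of_lt _ (show i < k - 1 by omega), G.map_mOH_self, hrec i hik,
      ← mul_assoc,
      mul_eq_one_comm.mp (aProd_inv_mul_dProd (fun j => G.map (mOH i j n) (y j)) _ _), one_mul]

section IsTriangularSolution
variable {G}

theorem IsTriangularSolution.unique {n k : ℕ} {g y z : ℕ → G.obj n}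
    (hy : G.IsTriangularSolution k g y) (hz : G.IsTriangularSolution k g z) : y = z := by
  funext i
  refine forall_by_descending_induction (k - 1)
    (fun i hi => (hy.1 i (by omega)).trans (hz.1 i (by omega)).symm) (fun i hi ih => ?_) i
  have h := hy.2 i (by omega)
  rw [← hz.2 i (by omega), dProd_of_lt (fun j => G.map (mOH i j n) (y j)) (by omega),
    dProd_of_lt (fun j => G.map (mOH i j n) (z j)) (by omega), G.map_mOH_self, G.map_mOH_self,
    dProd_congr _ _ (fun j hj _ => by rw [ih j hj])] at h
  exact mul_left_cancel h

theorem IsTriangularSolution.map_mOH_dProd {n k : ℕ} {g y : ℕ → G.obj n}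
    (hy : G.IsTriangularSolution k g y) {a : ℕ} (ha : a < k) :
    G.map (mOH a (k-1) n) (dProd y a (k-1)) = G.map (mOH a (k-1) n) (dProd g a (k-1)) := by
  have hφ : ∀ v, fApp (mOH a (k-1) n) v ≤ k-1 → fApp (mOH a (k-1) n) v ≤ a := fun v => by
    rw [fApp_mOH]; split_ifs <;> omega
  have h := congrArg (G.map (mOH a (k-1) n)) (hy.2 a ha)
  rw [G.map_map_mOH_absorb _ hφ (by omega), G.map_dProd] at h
  rw [← h, G.map_dProd]
  exact dProd_congr _ _ (fun j hj1 hj2 => ((G.map_map_mOH_congr _ hφ hj1 hj2.le _).trans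
    (G.map_map_mOH_absorb _ hφ (by omega) _)).symm)

variable (G) in
def diagMapSeq {m n : ℕ} (θ : Fin (m+1) →o Fin (n+1)) (y : ℕ → G.obj n) (i : ℕ) : G.obj m :=
  dProd (fun u => G.map θ (y u)) (fApp θ i) (fApp θ (i+1))

variable {m n k K : ℕ} {g y : ℕ → G.obj n}

theorem IsTriangularSolution.map_dProd_mOH_top {a b : ℕ} (hy : G.IsTriangularSolution k g y)
    (φ : Fin (m+1) →o Fin (n+1)) (hφ : ∀ v, fApp φ v ≤ k-1 → fApp φ v ≤ a) (hba : b ≤ a)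
    (hak : a < k) :
    G.map φ (dProd (fun u => G.map (mOH b u n) (y u)) a (k-1)) =
      G.map φ (G.map (mOH b (k-1) n) (dProd g a (k-1))) := by
  have hφ' : ∀ v, fApp ((mOH b (k-1) n).comp φ) v ≤ k-1 →
      fApp ((mOH b (k-1) n).comp φ) v ≤ a := fun v => by
    have := hφ v
    have := fApp_le φ v
    rw [fApp_comp, fApp_mOH]
    split_ifs <;> omega
  calc _ = G.map φ (G.map (mOH b (k-1) n) (dProd y a (k-1))) := by
        simp only [G.map_dProd]
        exact dProd_congr _ _ (fun u hu1 hu2 => G.map_map_mOH_congr φ hφ hu1 hu2.le _)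
    _ = G.map ((mOH b (k-1) n).comp φ) (G.map (mOH a (k-1) n) (dProd y a (k-1))) := by
        rw [G.map_comp, G.map_map_mOH_absorb _ hφ' (by omega)]
    _ = G.map ((mOH b (k-1) n).comp φ) (G.map (mOH a (k-1) n) (dProd g a (k-1))) := by
        rw [hy.map_mOH_dProd hak]
    _ = _ := by rw [G.map_map_mOH_absorb _ hφ' (by omega), G.map_comp]

theorem IsTriangularSolution.diagMapSeq_of_le (hy : G.IsTriangularSolution k g y)
    (θ : Fin (m+1) →o Fin (n+1)) (hK : ∀ v, fApp θ v < k ↔ min v m < K) {i : ℕ}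
    (hi : K ≤ i + 1) : G.diagMapSeq θ y i = G.diagMapSeq θ g i := by
  unfold diagMapSeq
  rw [← G.map_dProd, ← G.map_dProd]
  by_cases him : m ≤ i
  · rw [fApp_congr θ (show min (i+1) m = min i m by omega), dProd_empty _ le_rfl,
      dProd_empty _ le_rfl]
  have hupper : ∀ a b, k ≤ a + 1 → dProd y a b = dProd g a b :=
    fun a b h => dProd_congr _ _ (fun u hu _ => hy.1 u (by omega))
  by_cases hk : k ≤ fApp θ i
  · rw [hupper _ _ (by omega)]
  have hKi : K = i + 1 := by have := (hK i).1 (by omega); omega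
  have hk' : k ≤ fApp θ (i+1) := by
    by_contra h
    have := (hK (i+1)).1 (by omega)
    omega
  have hφ : ∀ v, fApp θ v ≤ k-1 → fApp θ v ≤ fApp θ i := fun v hv =>
    fApp_le_fApp_of_min_le θ (by have := (hK v).1 (by omega); omega)
  have hlower : G.map θ (dProd y (fApp θ i) (k-1)) = G.map θ (dProd g (fApp θ i) (k-1)) := by
    rw [← G.map_map_mOH_absorb θ hφ (by omega), hy.map_mOH_dProd (by omega),
      G.map_map_mOH_absorb θ hφ (by omega)]
  have h1 : fApp θ i ≤ k - 1 := by omega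
  have h2 : k - 1 ≤ fApp θ (i+1) := by omega
  rw [dProd_split y h1 h2, dProd_split g h1 h2, hupper _ _ (by omega), G.map_mul, G.map_mul,
    hlower]

theorem IsTriangularSolution.diagMapSeq_dProd (hy : G.IsTriangularSolution k g y)
    (θ : Fin (m+1) →o Fin (n+1)) (hK : ∀ v, fApp θ v < k ↔ min v m < K) {i : ℕ} (hi : i < K) :
    dProd (fun j => G.map (mOH i j m) (G.diagMapSeq θ y j)) i (K-1) =
      G.map (mOH i (K-1) m) (dProd (G.diagMapSeq θ g) i (K-1)) := by
  set a := fApp θ (K-1)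
  set b := fApp θ i
  have hba : b ≤ a := fApp_le_fApp_of_min_le θ (by omega)
  have hak : a < k := (hK (K-1)).2 (by omega)
  have hφ : ∀ v, fApp θ v ≤ k-1 → fApp θ v ≤ a := fun v hv =>
    fApp_le_fApp_of_min_le θ (by have := (hK v).1 (by omega); omega)
  have hglue : ∀ f : ℕ → G.obj n, dProd (fun j => dProd (fun u => G.map θ (f u)) (fApp θ j)
      (fApp θ (j+1))) i (K-1) = G.map θ (dProd f b a) := fun f => by
    rw [G.map_dProd]
    exact dProd_glue _ _ (fun _ _ h => fApp_mono θ h) (by omega)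
  have hL : dProd (fun j => G.map (mOH i j m) (G.diagMapSeq θ y j)) i (K-1)
      = G.map θ (dProd (fun u => G.map (mOH b u n) (y u)) b a) := by
    rw [← hglue]
    refine dProd_congr _ _ (fun j hj1 hj2 => ?_)
    rw [diagMapSeq, G.map_dProd]
    exact dProd_congr _ _ (fun u hu1 hu2 => G.map_mOH_map_comm θ hu1
      (fun v hv _ => lt_of_lt_of_le hu2 (fApp_mono θ (by omega))) _)
  have hR : G.map (mOH i (K-1) m) (dProd (G.diagMapSeq θ g) i (K-1))
      = G.map θ (G.map (mOH b (k-1) n) (dProd g b a)) := by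
    refine (congrArg _ (hglue g)).trans (G.map_mOH_map_comm θ (by omega) (fun v h1 h2 => ?_) _)
    have := (hK v).not.2 (by omega)
    omega
  -- `θ` applied to the system at `b`, split at `a`; the factors above `a` agree on both sides.
  have hsys := congrArg (G.map θ) (hy.2 b (by omega))
  rw [dProd_split _ hba (by omega : a ≤ k-1), dProd_split g hba (by omega : a ≤ k-1), G.map_mul,
    G.map_mul, G.map_mul, hy.map_dProd_mOH_top θ hφ hba hak] at hsys
  rw [hL, hR]
  exact mul_left_cancel hsys

theorem IsTriangularSolution.diagMapSeq (hy : G.IsTriangularSolution k g y)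
    (θ : Fin (m+1) →o Fin (n+1)) (hK : ∀ v, fApp θ v < k ↔ min v m < K) :
    G.IsTriangularSolution K (G.diagMapSeq θ g) (G.diagMapSeq θ y) :=
  ⟨fun _ hi => hy.diagMapSeq_of_le θ hK hi, fun _ hi => hy.diagMapSeq_dProd θ hK hi⟩

end IsTriangularSolution

theorem isTriangularSolution_homotopyY {n k : ℕ} (g : ℕ → G.obj n) (hk : k ≤ n + 1) :
    G.IsTriangularSolution k g (G.homotopyY n k g) :=
  G.isTriangularSolution_of_rec (fun _ hi => G.homotopyY_of_le hi)
    (fun _ hi => G.homotopyY_rec g hk hi)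

theorem isTriangularSolution_sectionY_DGn {n : ℕ} (x : Fin n → G.obj n) :
    G.IsTriangularSolution (n+1) (G.xE x) (G.sectionY n (G.gE (G.DGn n x))) := by
  refine G.isTriangularSolution_of_rec (fun i hi => ?_) (fun i hi => ?_)
  · rw [G.sectionY_of_le (by omega), xE, dif_neg (by omega)]
  · rw [G.sectionY_rec _ (by omega), Nat.add_sub_cancel, G.map_dProd]
    congr 1
    refine dProd_congr _ _ (fun j hj1 hj2 => ?_)
    rw [gE, dif_pos hj2, G.DGn_apply, G.map_comp, xE, dif_pos hj2]
    exact G.map_congr_fApp (fun v => by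
      simp only [fApp_comp, fApp_mOH, fApp_iOH, fApp_cOH]; split_ifs <;> omega) _

theorem Hn_apply {n : ℕ} (x : Fin n → G.obj n) (t : Fin (n+1) →o Fin 2) (i : Fin n) :
    G.Hn n x t i = G.homotopyY n (kOf t) (G.xE x) i := rfl

theorem Hn_τOH_succ {n : ℕ} (x : Fin n → G.obj n) : G.Hn n x (τOH n (n+1)) = x := by
  funext i
  rw [Hn_apply, kOf_τOH, G.homotopyY_of_le (by omega), xE, dif_pos i.isLt]

theorem Hn_τOH_zero {n : ℕ} (x : Fin n → G.obj n) :
    G.Hn n x (τOH n 0) = G.SGn n (G.DGn n x) := by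
  funext i
  rw [Hn_apply, kOf_τOH, G.SGn_apply, Nat.sub_zero,
    (G.isTriangularSolution_homotopyY _ le_rfl).unique (G.isTriangularSolution_sectionY_DGn x)]

theorem diagMap_apply {m n : ℕ} (θ : Fin (m+1) →o Fin (n+1)) (x : Fin n → G.obj n)
    (i : Fin m) : G.diagMap θ x i = G.diagMapSeq θ (G.xE x) i := by
  unfold diagMap diagMapSeq
  rw [← fApp_coe θ i.castSucc, ← fApp_coe θ i.succ, Fin.val_castSucc, Fin.val_succ]

theorem xE_diagMap {m n : ℕ} (θ : Fin (m+1) →o Fin (n+1)) (x : Fin n → G.obj n) :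
    G.xE (G.diagMap θ x) = G.diagMapSeq θ (G.xE x) := by
  funext j
  by_cases hj : j < m
  · rw [xE, dif_pos hj, G.diagMap_apply]
  · rw [xE, dif_neg hj, diagMapSeq, fApp_congr θ (show min (j+1) m = min j m by omega),
      dProd_empty _ le_rfl]

theorem xE_Hn {n : ℕ} (x : Fin n → G.obj n) (t : Fin (n+1) →o Fin 2) :
    G.xE (G.Hn n x t) = G.homotopyY n (kOf t) (G.xE x) := by
  funext j
  by_cases hj : j < n
  · rw [xE, dif_pos hj]
    rfl
  · rw [xE, dif_neg hj, G.homotopyY_of_le (by have := kOf_le t; omega), xE, dif_neg hj]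

theorem diagMap_Hn {m n : ℕ} (θ : Fin (m+1) →o Fin (n+1)) (x : Fin n → G.obj n)
    (t : Fin (n+1) →o Fin 2) :
    G.diagMap θ (G.Hn n x t) = G.Hn m (G.diagMap θ x) (t.comp θ) := by
  funext i
  rw [G.diagMap_apply, Hn_apply, xE_Hn, xE_diagMap]
  exact congrFun (((G.isTriangularSolution_homotopyY _ (kOf_le t)).diagMapSeq θ
    (fApp_lt_kOf_iff t θ)).unique (G.isTriangularSolution_homotopyY _ (kOf_le _))) i

end SGrp
end Paper

open Paper Paper.SGrp in
/-- `W̄G` and `Diag NG` are simplicially homotopy equivalent, via the mutually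
inverse homotopy equivalences `D_G` and `S_G`: `S_G D_G = id` on `W̄G` (hence homotopic to
the identity via a simplicial homotopy `K`) and `D_G S_G` is simplicially homotopic to the
identity of `Diag NG` via a simplicial homotopy `H`. -/
theorem stmt_18 (G : SGrp) :
    (∀ (n : ℕ) (x : G.WbarN n), G.DGn n (G.SGn n x) = x) ∧
    (∃ H : ∀ n : ℕ, (Fin n → G.obj n) → (Fin (n+1) →o Fin 2) → (Fin n → G.obj n),
      (∀ {m n : ℕ} (θ : Fin (m+1) →o Fin (n+1)) (x : Fin n → G.obj n) (t : Fin (n+1) →o Fin 2),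
        G.diagMap θ (H n x t) = H m (G.diagMap θ x) (t.comp θ)) ∧
      (∀ (n : ℕ) (x : Fin n → G.obj n), H n x (τOH n 0) = G.SGn n (G.DGn n x)) ∧
      (∀ (n : ℕ) (x : Fin n → G.obj n), H n x (τOH n (n+1)) = x)) ∧
    (∃ K : ∀ n : ℕ, G.WbarN n → (Fin (n+1) →o Fin 2) → G.WbarN n,
      (∀ {m n : ℕ} (θ : Fin (m+1) →o Fin (n+1)) (x : G.WbarN n) (t : Fin (n+1) →o Fin 2),
        G.wbarMap θ (K n x t) = K m (G.wbarMap θ x) (t.comp θ)) ∧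
      (∀ (n : ℕ) (x : G.WbarN n), K n x (τOH n 0) = G.DGn n (G.SGn n x)) ∧
      (∀ (n : ℕ) (x : G.WbarN n), K n x (τOH n (n+1)) = x)) := by
  exact ⟨fun _ x => G.DGn_SGn x,
      ⟨G.Hn, fun θ x t => G.diagMap_Hn θ x t, fun _ x => G.Hn_τOH_zero x,
        fun _ x => G.Hn_τOH_succ x⟩,
      ⟨fun _ x _ => x, fun _ _ _ => rfl, fun _ x => (G.DGn_SGn x).symm, fun _ _ => rfl⟩⟩
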